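/- arXiv:1504.05472 — 6 statements merged into one kernel-verified Lean document; each statement's English description precedes it below -/
import Mathlib

section
/- For any real numbers η > -1, p ∈ [-1,1], and τ > 0, the function q₀(τ) = cos(τ)·cos(τηp) − p·sin(τ)·sin(τηp) and its derivative ∂q₀/∂τ(τ) = −(1+ηp²)·sin(τ)·cos(τηp) − p(η+1)·cos(τ)·sin(τηp) cannot both vanish; i.e., q₀ has no multiple zeros in τ. -/
open Real
noncomputable def q0 (η p τ : ℝ) : ℝ := Real.cos τ * Real.cos (τ*η*p) - p * Real.sin τ * Real.sin (τ*η*p)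
noncomputable def q3 (η p τ : ℝ) : ℝ := Real.cos τ * Real.sin (τ*η*p) + p * Real.sin τ * Real.cos (τ*η*p)

/-!
With `a = cos τ`, `b = sin τ`, `c = cos (τηp)`, `s = sin (τηp)`, `A = 1 + ηp²` and `B = η + 1`,
a double zero is a solution of the linear system `a c - p b s = 0`, `A b c + p B a s = 0` in
`(c, s)`. Since `A, B > 0` and `a² + b² = 1`, eliminating either unknown gives `c = 0` and
`p s = 0`. Then `s = ±1`, so `p = 0`; but then `c = cos 0 = 1`.
-/

lemma one_add_mul_sq_pos {η p : ℝ} (hη : -1 < η) (hp : p ^ 2 ≤ 1) : 0 < 1 + η * p ^ 2 := by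
  rcases hp.lt_or_eq with hp | hp
  · nlinarith [mul_nonneg (by linarith : (0 : ℝ) ≤ 1 + η) (sq_nonneg p)]
  · rw [hp]; linarith

lemma mul_sq_add_mul_sq_pos {A B a b : ℝ} (hA : 0 < A) (hB : 0 < B) (hab : a ^ 2 + b ^ 2 = 1) :
    0 < B * a ^ 2 + A * b ^ 2 := by
  rcases le_total A B with h | h
  · nlinarith [mul_nonneg (sub_nonneg.mpr h) (sq_nonneg a)]
  · nlinarith [mul_nonneg (sub_nonneg.mpr h) (sq_nonneg b)]

lemma eq_zero_and_mul_eq_zero_of_system {A B a b c s p : ℝ} (hA : 0 < A) (hB : 0 < B)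
    (hab : a ^ 2 + b ^ 2 = 1) (h₁ : a * c - p * b * s = 0)
    (h₂ : A * b * c + p * B * a * s = 0) :
    c = 0 ∧ p * s = 0 := by
  have hdet := (mul_sq_add_mul_sq_pos hA hB hab).ne'
  have hc : c * (B * a ^ 2 + A * b ^ 2) = 0 := by linear_combination B * a * h₁ + b * h₂
  have hs : p * s * (B * a ^ 2 + A * b ^ 2) = 0 := by linear_combination a * h₂ - A * b * h₁
  exact ⟨(mul_eq_zero.mp hc).resolve_right hdet, (mul_eq_zero.mp hs).resolve_right hdet⟩

theorem stmt0_general (η p τ : ℝ) (hη : η > -1) (hp : p ∈ Set.Icc (-1:ℝ) 1) :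
    ¬ (q0 η p τ = 0 ∧
       -(1 + η*p^2) * Real.sin τ * Real.cos (τ*η*p) - p*(η+1) * Real.cos τ * Real.sin (τ*η*p) = 0) := by
  rintro ⟨hq, hdq⟩
  have hA : 0 < 1 + η * p ^ 2 :=
    one_add_mul_sq_pos hη ((sq_le_one_iff_abs_le_one p).mpr (abs_le.mpr hp))
  obtain ⟨hc, hps⟩ := eq_zero_and_mul_eq_zero_of_system (B := η + 1) hA (by linarith)
    (cos_sq_add_sin_sq τ) hq (by linear_combination -hdq)
  have hs : Real.sin (τ * η * p) ≠ 0 := by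
    intro hs
    simpa [hc, hs] using sin_sq_add_cos_sq (τ * η * p)
  have hp0 : p = 0 := (mul_eq_zero.mp hps).resolve_right hs
  simp [hp0] at hc

theorem stmt0 (η p τ : ℝ) (hη : η > -1) (hp : p ∈ Set.Icc (-1:ℝ) 1) (hτ : τ > 0) :
    ¬ (q0 η p τ = 0 ∧
       -(1 + η*p^2) * Real.sin τ * Real.cos (τ*η*p) - p*(η+1) * Real.cos τ * Real.sin (τ*η*p) = 0) :=
  stmt0_general η p τ hη hp
end

section
/- If η ≥ -1/2 (and η > -1), then for every p ∈ [-1,1] the function q₀(τ) = cos(τ)cos(τηp) − p·sin(τ)sin(τηp) has a zero in the interval (0, π]. -/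
/-! With `a = η p`, the product formulas give
`q₀(τ) = (1 + p)/2 · cos((1 + a)τ) + (1 - p)/2 · cos((1 - a)τ)`, and `q₀` is even in `p`, so we may
take `p ≥ 0`. Since `q₀(0) = 1`, it suffices to find `T ∈ (0, π]` with `q₀(T) ≤ 0`. If `a ≥ 0`, take
`T = π/(1 + a)`: the first cosine is `-1`, so `q₀(T) ≤ -(1 + p)/2 + (1 - p)/2 = -p ≤ 0`. If `a < 0`,
then `η ≥ -1/2` forces `a ≥ -1/2`, and `q₀(π) = -cos(π a) ≤ 0`. -/

open Real
open Set

theorem q0_eq_half_cos_add (η p τ : ℝ) :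
    q0 η p τ = (1 + p) / 2 * cos ((1 + η * p) * τ) + (1 - p) / 2 * cos ((1 - η * p) * τ) := by
  have hadd : (1 + η * p) * τ = τ + τ * η * p := by ring
  have hsub : (1 - η * p) * τ = τ - τ * η * p := by ring
  rw [q0, hadd, hsub, cos_add, cos_sub]
  ring

theorem q0_neg_right (η p τ : ℝ) : q0 η (-p) τ = q0 η p τ := by
  simp only [q0, mul_neg, cos_neg, sin_neg]
  ring

theorem continuous_q0 (η p : ℝ) : Continuous (q0 η p) := by
  unfold q0
  fun_prop

theorem q0_zero (η p : ℝ) : q0 η p 0 = 1 := by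
  simp [q0]

theorem exists_q0_eq_zero_of_nonpos {η p T : ℝ} (hT : 0 < T) (hTπ : T ≤ π) (hq : q0 η p T ≤ 0) :
    ∃ τ ∈ Ioc 0 π, q0 η p τ = 0 := by
  obtain ⟨τ, hτ, hτ0⟩ := intermediate_value_Icc' hT.le (continuous_q0 η p).continuousOn
    (show (0 : ℝ) ∈ Icc (q0 η p T) (q0 η p 0) by rw [q0_zero]; exact ⟨hq, zero_le_one⟩)
  have hτ_ne : τ ≠ 0 := by
    rintro rfl
    simp [q0_zero] at hτ0
  exact ⟨τ, ⟨lt_of_le_of_ne hτ.1 (Ne.symm hτ_ne), hτ.2.trans hTπ⟩, hτ0⟩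

theorem q0_pi_nonpos {η p : ℝ} (h : |η * p| ≤ 1 / 2) : q0 η p π ≤ 0 := by
  have hq : q0 η p π = -cos (π * (η * p)) := by
    simp [q0, mul_assoc]
  obtain ⟨hlo, hhi⟩ := abs_le.1 h
  rw [hq, neg_nonpos]
  apply cos_nonneg_of_mem_Icc
  constructor <;> nlinarith [pi_pos]

theorem q0_pi_div_nonpos {η p : ℝ} (hp0 : 0 ≤ p) (hp1 : p ≤ 1) (ha : 0 < 1 + η * p) :
    q0 η p (π / (1 + η * p)) ≤ 0 := by
  have hcos : cos ((1 + η * p) * (π / (1 + η * p))) = -1 := by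
    rw [mul_div_cancel₀ _ ha.ne', cos_pi]
  rw [q0_eq_half_cos_add, hcos]
  nlinarith [cos_le_one ((1 - η * p) * (π / (1 + η * p)))]

theorem exists_q0_eq_zero_of_mul_nonneg {η p : ℝ} (hp0 : 0 ≤ p) (hp1 : p ≤ 1) (ha : 0 ≤ η * p) :
    ∃ τ ∈ Ioc 0 π, q0 η p τ = 0 := by
  have hden : 0 < 1 + η * p := by linarith
  refine exists_q0_eq_zero_of_nonpos (div_pos pi_pos hden) ?_ (q0_pi_div_nonpos hp0 hp1 hden)
  rw [div_le_iff₀ hden]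
  nlinarith [pi_pos]

theorem stmt3_general (η p : ℝ) (hη2 : η ≥ -1/2) (hp : p ∈ Set.Icc (-1:ℝ) 1) :
    ∃ τ ∈ Set.Ioc (0:ℝ) Real.pi, q0 η p τ = 0 := by
  obtain ⟨hp_lo, hp_hi⟩ := hp
  wlog hp0 : 0 ≤ p generalizing p
  · simpa only [q0_neg_right] using this (-p) (by linarith) (by linarith) (by linarith)
  rcases le_or_gt 0 (η * p) with ha | ha
  · exact exists_q0_eq_zero_of_mul_nonneg hp0 hp_hi ha
  · have ha_lo : -(1 / 2) ≤ η * p := by nlinarith [mul_nonneg (by linarith : 0 ≤ η + 1 / 2) hp0]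
    exact exists_q0_eq_zero_of_nonpos pi_pos le_rfl
      (q0_pi_nonpos (abs_le.2 ⟨ha_lo, by linarith⟩))

theorem stmt3 (η p : ℝ) (hη : η > -1) (hη2 : η ≥ -1/2) (hp : p ∈ Set.Icc (-1:ℝ) 1) :
    ∃ τ ∈ Set.Ioc (0:ℝ) Real.pi, q0 η p τ = 0 :=
  stmt3_general η p hη2 hp
end

section
/- If -1 < η < -1/2 and 1/(2|η|) ≤ |p| ≤ 1, then the smallest positive zero of q₀(τ) = cos(τ)cos(τηp) − p·sin(τ)sin(τηp) is at least π. -/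
/-!
With `b = -η|p| ∈ [1/2, 1]` and `s = |p| > 1/2`, the function is
`q₀(τ) = cos τ cos(bτ) + s sin τ sin(bτ)`. Writing `b = c + 1/2` and expanding in the half angle
`τ/2` gives
`q₀(τ) = cos(cτ) cos(τ/2) (s + (1-s) cos τ) + sin(cτ) sin(τ/2) (s - (1-s) cos τ)`,
and for `0 < τ < π` the first summand is positive and the second nonnegative, because
`s ± (1-s) cos τ` is affine in `cos τ ∈ [-1, 1]` with endpoint values `1` and `2s - 1`.
So `q₀` has no zero in `(0, π)`.
-/

open Real

lemma q0_eq_abs (η p τ : ℝ) :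
    q0 η p τ = cos τ * cos (-η * |p| * τ) + |p| * sin τ * sin (-η * |p| * τ) := by
  rcases le_or_gt 0 p with hp | hp
  · rw [q0, abs_of_nonneg hp, show τ * η * p = -(-η * p * τ) by ring, cos_neg, sin_neg]
    ring
  · rw [q0, abs_of_neg hp, show τ * η * p = -η * -p * τ by ring]
    ring

lemma cos_mul_cos_add_mul_sin_mul_sin_eq_half_angle (c s τ : ℝ) :
    cos τ * cos ((c + 1/2) * τ) + s * sin τ * sin ((c + 1/2) * τ)
      = cos (c * τ) * cos (τ/2) * (s + (1 - s) * cos τ)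
        + sin (c * τ) * sin (τ/2) * (s - (1 - s) * cos τ) := by
  have hcos : cos τ = cos (τ/2) ^ 2 - sin (τ/2) ^ 2 := by
    rw [← cos_two_mul', mul_div_cancel₀ τ two_ne_zero]
  have hsin : sin τ = 2 * sin (τ/2) * cos (τ/2) := by
    rw [← sin_two_mul, mul_div_cancel₀ τ two_ne_zero]
  rw [add_mul, cos_add, sin_add, hcos, hsin, show 1/2 * τ = τ/2 by ring]
  linear_combination (s * cos (c * τ) * cos (τ/2) + s * sin (c * τ) * sin (τ/2))
    * sin_sq_add_cos_sq (τ/2)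

lemma add_one_sub_mul_pos {s x : ℝ} (hs : 1/2 < s) (hx : |x| ≤ 1) : 0 < s + (1 - s) * x := by
  obtain ⟨hx₁, hx₂⟩ := abs_le.mp hx
  rcases le_total 0 x with h | h <;> nlinarith

lemma cos_mul_cos_add_mul_sin_mul_sin_pos {b s τ : ℝ} (hs : 1/2 < s)
    (hb : 1/2 ≤ b) (hb' : b ≤ 1) (hτ : 0 < τ) (hτπ : τ < π) :
    0 < cos τ * cos (b * τ) + s * sin τ * sin (b * τ) := by
  obtain ⟨c, rfl⟩ : ∃ c, b = c + 1/2 := ⟨b - 1/2, by ring⟩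
  have hcτ : 0 ≤ c * τ := mul_nonneg (by linarith) hτ.le
  have hcτ' : c * τ ≤ τ / 2 := by nlinarith
  have hcos_c : 0 < cos (c * τ) := cos_pos_of_mem_Ioo ⟨by linarith [pi_pos], by linarith⟩
  have hsin_c : 0 ≤ sin (c * τ) := sin_nonneg_of_nonneg_of_le_pi hcτ (by linarith)
  have hcos_half : 0 < cos (τ/2) := cos_pos_of_mem_Ioo ⟨by linarith [pi_pos], by linarith⟩
  have hsin_half : 0 < sin (τ/2) := sin_pos_of_pos_of_lt_pi (by linarith) (by linarith)
  have hplus := add_one_sub_mul_pos hs (abs_cos_le_one τ)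
  have hminus : 0 < s - (1 - s) * cos τ := by
    simpa using add_one_sub_mul_pos hs ((abs_neg (cos τ)).trans_le (abs_cos_le_one τ))
  rw [cos_mul_cos_add_mul_sin_mul_sin_eq_half_angle]
  positivity

theorem stmt4 (η p τ₀ : ℝ) (hη : -1 < η) (hη2 : η < -1/2)
    (hp1 : 1/(2*|η|) ≤ |p|) (hp2 : |p| ≤ 1)
    (h : IsLeast {τ : ℝ | 0 < τ ∧ q0 η p τ = 0} τ₀) :
    Real.pi ≤ τ₀ := by
  obtain ⟨⟨hτ₀, hq0⟩, -⟩ := h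
  by_contra! hτ₀π
  have hη_abs : |η| = -η := abs_of_neg (by linarith)
  rw [hη_abs, div_le_iff₀ (by linarith)] at hp1
  have hs : 1/2 < |p| := by nlinarith
  have hb : 1/2 ≤ -η * |p| := by linarith
  have hb' : -η * |p| ≤ 1 := by nlinarith [abs_nonneg p]
  rw [q0_eq_abs] at hq0
  exact (cos_mul_cos_add_mul_sin_mul_sin_pos hs hb hb' hτ₀ hτ₀π).ne' hq0
end

section
/- For η > -1 and p ∈ [-1,1] with p ≠ 0, the smallest positive zero τ₀(p) of q₀(τ) = cos(τ)cos(τηp) − p·sin(τ)sin(τηp) is strictly less than the smallest positive zero τ₃(p) of q₃(τ) = cos(τ)sin(τηp) + p·sin(τ)cos(τηp). -/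
open Real
/-!
Writing `θ = τηp`, one has `q0 + i q3 = (cos τ + i p sin τ) e^{iθ}`, so `q3 = 0` and `q0 = 0` mark
the times at which the argument of this curve crosses `πℤ` and `π/2 + πℤ`. The Wronskian
`q0 q3' - q3 q0' = p((1+η) cos² τ + (1+ηp²) sin² τ)` never vanishes, so the argument is strictly
monotone. As `q3` vanishes at `0` and at `τ₃`, Sturm separation gives a zero of `q0` in `[0, τ₃]`,
and it cannot lie at `τ₃` because `q0² + q3² = cos² τ + p² sin² τ > 0`.
-/

open Set

theorem exists_mem_Icc_eq_zero_of_wronskian_ne_zero {f g f' g' : ℝ → ℝ} {a b : ℝ} (hab : a < b)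
    (hf : ContinuousOn f (Icc a b)) (hg : ContinuousOn g (Icc a b))
    (hff' : ∀ x ∈ Ioo a b, HasDerivAt f (f' x) x) (hgg' : ∀ x ∈ Ioo a b, HasDerivAt g (g' x) x)
    (hfa : f a = 0) (hfb : f b = 0) (hW : ∀ x ∈ Ioo a b, f' x * g x - f x * g' x ≠ 0) :
    ∃ c ∈ Icc a b, g c = 0 := by
  by_contra! hg0
  obtain ⟨c, hc, hc0⟩ := exists_hasDerivAt_eq_zero hab (hf.div hg hg0) (by simp [hfa, hfb])
    fun x hx => (hff' x hx).div (hgg' x hx) (hg0 x (Ioo_subset_Icc_self hx))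
  rcases div_eq_zero_iff.mp hc0 with h | h
  · exact hW c hc h
  · exact hg0 c (Ioo_subset_Icc_self hc) (pow_eq_zero_iff two_ne_zero |>.mp h)

theorem hasDerivAt_q0 (η p τ : ℝ) :
    HasDerivAt (q0 η p)
      (-((1 + η * p ^ 2) * sin τ * cos (τ * η * p) + p * (1 + η) * cos τ * sin (τ * η * p))) τ := by
  have hθ : HasDerivAt (fun x : ℝ => x * η * p) (η * p) τ := by
    simpa using ((hasDerivAt_id τ).mul_const η).mul_const p
  exact (((hasDerivAt_cos τ).mul hθ.cos).sub (((hasDerivAt_sin τ).const_mul p).mul hθ.sin))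
    |>.congr_deriv (by ring)

theorem hasDerivAt_q3 (η p τ : ℝ) :
    HasDerivAt (q3 η p)
      (p * (1 + η) * cos τ * cos (τ * η * p) - (1 + η * p ^ 2) * sin τ * sin (τ * η * p)) τ := by
  have hθ : HasDerivAt (fun x : ℝ => x * η * p) (η * p) τ := by
    simpa using ((hasDerivAt_id τ).mul_const η).mul_const p
  exact (((hasDerivAt_cos τ).mul hθ.sin).add (((hasDerivAt_sin τ).const_mul p).mul hθ.cos))
    |>.congr_deriv (by ring)

theorem q3_wronskian_q0 (η p τ : ℝ) :
    (p * (1 + η) * cos τ * cos (τ * η * p) - (1 + η * p ^ 2) * sin τ * sin (τ * η * p)) * q0 η p τ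
      - q3 η p τ *
        -((1 + η * p ^ 2) * sin τ * cos (τ * η * p) + p * (1 + η) * cos τ * sin (τ * η * p))
      = p * ((1 + η) * cos τ ^ 2 + (1 + η * p ^ 2) * sin τ ^ 2) := by
  simp only [q0, q3]
  linear_combination p * ((1 + η) * cos τ ^ 2 + (1 + η * p ^ 2) * sin τ ^ 2) *
    sin_sq_add_cos_sq (τ * η * p)

theorem q0_sq_add_q3_sq (η p τ : ℝ) :
    q0 η p τ ^ 2 + q3 η p τ ^ 2 = cos τ ^ 2 + p ^ 2 * sin τ ^ 2 := by
  simp only [q0, q3]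
  linear_combination (cos τ ^ 2 + p ^ 2 * sin τ ^ 2) * sin_sq_add_cos_sq (τ * η * p)

theorem cos_sq_add_mul_sin_sq_pos {a b : ℝ} (ha : 0 < a) (hb : 0 < b) (τ : ℝ) :
    0 < a * cos τ ^ 2 + b * sin τ ^ 2 := by
  nlinarith [sin_sq_add_cos_sq τ, min_le_left a b, min_le_right a b, lt_min ha hb,
    sq_nonneg (cos τ), sq_nonneg (sin τ)]

theorem stmt6 (η p τ₀ τ₃ : ℝ) (hη : η > -1) (hp : p ∈ Set.Icc (-1:ℝ) 1) (hp0 : p ≠ 0)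
    (h0 : IsLeast {τ : ℝ | 0 < τ ∧ q0 η p τ = 0} τ₀)
    (h3 : IsLeast {τ : ℝ | 0 < τ ∧ q3 η p τ = 0} τ₃) :
    τ₀ < τ₃ := by
  obtain ⟨⟨hτ₃, hq3τ₃⟩, -⟩ := h3
  by_contra! hτ₃τ₀
  have hp2 : 0 < p ^ 2 := by positivity
  have hηp : 0 < 1 + η * p ^ 2 := by nlinarith [hp.1, hp.2]
  obtain ⟨c, ⟨hc0, hcτ₃⟩, hq0c⟩ := exists_mem_Icc_eq_zero_of_wronskian_ne_zero hτ₃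
    (HasDerivAt.continuousOn fun x _ => hasDerivAt_q3 η p x)
    (HasDerivAt.continuousOn fun x _ => hasDerivAt_q0 η p x)
    (fun x _ => hasDerivAt_q3 η p x) (fun x _ => hasDerivAt_q0 η p x)
    (by simp [q3]) hq3τ₃ fun x _ => by
      rw [q3_wronskian_q0]
      exact mul_ne_zero hp0 (cos_sq_add_mul_sin_sq_pos (by linarith) hηp x).ne'
  have hc : 0 < c := hc0.lt_of_ne fun h => by simp [← h, q0] at hq0c
  have hcτ : c = τ₃ := le_antisymm hcτ₃ (hτ₃τ₀.trans (h0.2 ⟨hc, hq0c⟩))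
  subst hcτ
  have hsq := q0_sq_add_q3_sq η p c
  rw [hq0c, hq3τ₃] at hsq
  linarith [cos_sq_add_mul_sin_sq_pos one_pos hp2 c]
end

section
/- If -1 < η ≤ 0 and p ∈ [-1,1], p ≠ 0, then the smallest positive zero τ₃(p) of q₃(τ) = cos(τ)sin(τηp) + p·sin(τ)cos(τηp) satisfies τ₃(p) ≥ π. -/
open Real
/-
Writing `q₃` as a combination of sines,
`2 q₃(τ) = (1 + p) sin (τ (1 + η p)) - (1 - p) sin (τ (1 - η p))`.
For `0 < p ≤ 1` and `0 < τ < π` the first argument `u` lies in `(0, π)` and the second `v ≥ u`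
lies in `(0, 2π)`. If `sin v ≤ 0` then `q₃(τ) > 0` at once; otherwise `v ≤ π`, and concavity of
`sin` on `[0, π]` gives `sin v / v ≤ sin u / u`, which together with
`(1 - p) v < (1 + p) u` (equivalent to `p (1 + η) > 0`) again gives `q₃(τ) > 0`.
Since `q₃` is odd in `p`, it has no zero in `(0, π)` for `p ≠ 0`.
-/

namespace Real

theorem mul_sin_le_mul_sin {u v : ℝ} (hu : 0 ≤ u) (huv : u ≤ v) (hv : v ≤ π) :
    u * sin v ≤ v * sin u := by
  rcases (hu.trans huv).eq_or_lt with rfl | hv₀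
  · simp [le_antisymm huv hu]
  have hconc := strictConcaveOn_sin_Icc.concaveOn.2 (⟨le_rfl, pi_pos.le⟩ : (0 : ℝ) ∈ Set.Icc 0 π)
    (⟨hv₀.le, hv⟩ : v ∈ Set.Icc 0 π) (sub_nonneg.2 ((div_le_one hv₀).2 huv))
    (div_nonneg hu hv₀.le) (sub_add_cancel 1 (u / v))
  simp only [smul_eq_mul, mul_zero, zero_add, sin_zero, div_mul_cancel₀ u hv₀.ne'] at hconc
  calc u * sin v = v * (u / v * sin v) := by field_simp
    _ ≤ v * sin u := mul_le_mul_of_nonneg_left hconc hv₀.le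

theorem mul_sin_lt_mul_sin {a c u v : ℝ} (ha : 0 ≤ a) (hu : 0 < u) (huπ : u < π) (huv : u ≤ v)
    (hv : v < 2 * π) (hac : a * v < c * u) : a * sin v < c * sin u := by
  have hsin_u : 0 < sin u := sin_pos_of_pos_of_lt_pi hu huπ
  rcases le_or_gt (sin v) 0 with hsin_v | hsin_v
  · have hc : 0 < c := pos_of_mul_pos_left ((mul_nonneg ha (hu.le.trans huv)).trans_lt hac) hu.le
    exact (mul_nonpos_of_nonneg_of_nonpos ha hsin_v).trans_lt (mul_pos hc hsin_u)
  have hvπ : v ≤ π := by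
    by_contra! hπv
    have := sin_pos_of_pos_of_lt_pi (x := v - π) (by linarith) (by linarith)
    rw [sin_sub_pi] at this
    linarith
  have hconc := mul_sin_le_mul_sin hu.le huv hvπ
  refine lt_of_mul_lt_mul_left ?_ hu.le
  calc u * (a * sin v) = a * (u * sin v) := by ring
    _ ≤ a * (v * sin u) := mul_le_mul_of_nonneg_left hconc ha
    _ = (a * v) * sin u := by ring
    _ < (c * u) * sin u := mul_lt_mul_of_pos_right hac hsin_u
    _ = u * (c * sin u) := by ring

end Real

theorem q3_eq (η p τ : ℝ) :
    q3 η p τ = ((1 + p) * sin (τ * (1 + η * p)) - (1 - p) * sin (τ * (1 - η * p))) / 2 := by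
  simp only [q3, mul_add, mul_sub, mul_one, sin_add, sin_sub, ← mul_assoc]
  ring

theorem q3_neg (η p τ : ℝ) : q3 η (-p) τ = -q3 η p τ := by
  simp only [q3, mul_neg, sin_neg, cos_neg]
  ring

theorem q3_pos {η p τ : ℝ} (hη : -1 < η) (hη₀ : η ≤ 0) (hp : 0 < p) (hp₁ : p ≤ 1)
    (hτ : 0 < τ) (hτπ : τ < π) : 0 < q3 η p τ := by
  have hηp : η ≤ η * p := by nlinarith
  have hηp₀ : η * p ≤ 0 := mul_nonpos_of_nonpos_of_nonneg hη₀ hp.le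
  rw [q3_eq]
  refine div_pos (sub_pos.2 (mul_sin_lt_mul_sin (sub_nonneg.2 hp₁) ?_ ?_ ?_ ?_ ?_)) two_pos
  · exact mul_pos hτ (by linarith)
  · nlinarith
  · exact mul_le_mul_of_nonneg_left (by linarith) hτ.le
  · nlinarith
  · nlinarith [mul_pos hτ (mul_pos hp (neg_lt_iff_pos_add'.1 hη))]

theorem q3_ne_zero {η p τ : ℝ} (hη : -1 < η) (hη₀ : η ≤ 0) (hp : p ∈ Set.Icc (-1 : ℝ) 1)
    (hp₀ : p ≠ 0) (hτ : 0 < τ) (hτπ : τ < π) : q3 η p τ ≠ 0 := by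
  obtain ⟨hp_ge, hp₁⟩ := hp
  rcases hp₀.lt_or_gt with hneg | hpos
  · have := q3_pos hη hη₀ (neg_pos.2 hneg) (by linarith) hτ hτπ
    rw [q3_neg] at this
    linarith
  · exact (q3_pos hη hη₀ hpos hp₁ hτ hτπ).ne'

theorem stmt9 (η p τ₃ : ℝ) (hη : -1 < η) (hη2 : η ≤ 0)
    (hp : p ∈ Set.Icc (-1:ℝ) 1) (hp0 : p ≠ 0)
    (h : IsLeast {τ : ℝ | 0 < τ ∧ q3 η p τ = 0} τ₃) :
    Real.pi ≤ τ₃ := by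
  obtain ⟨⟨hτ₃, hq⟩, -⟩ := h
  by_contra! hlt
  exact q3_ne_zero hη hη2 hp hp0 hτ₃ hlt hq
end

section
/- Let η > 0 and let τ_c ∈ (π/2, π) satisfy sin(τ_c) = −τ_c η cos(τ_c). Then the Hessian of the function q₃(p, τ) = cos(τ)sin(τηp) + p·sin(τ)cos(τηp) at the point (p, τ) = (0, τ_c) equals [[0, A],[A, 0]] with A = (1 + η + τ_c² η²)·cos(τ_c) ≠ 0; in particular (0, τ_c) is a nondegenerate saddle point of q₃. -/
open Real
/-!
`q₃` is odd in `p`, so `∂²q₃/∂p²` vanishes on `p = 0`, and `q₃(0, ·) ≡ 0`, so `∂²q₃/∂τ²` does too.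
The mixed partial is `d/dτ (τη cos τ + sin τ) = (1 + η) cos τ - τη sin τ`, which the conjugate-time
relation `sin τ_c = -τ_c η cos τ_c` turns into `(1 + η + τ_c² η²) cos τ_c`; this is nonzero since
`cos τ_c < 0`.
-/

section OddEven

variable {𝕜 F : Type*} [NontriviallyNormedField 𝕜] [NormedAddCommGroup F] [NormedSpace 𝕜 F]
  {f : 𝕜 → F}

theorem Function.Odd.deriv (hf : f.Odd) : (_root_.deriv f).Even := fun x => by
  have h := deriv_comp_neg f x
  simp only [hf.eq, deriv.fun_neg, neg_inj] at h
  exact h.symm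

theorem Function.Even.deriv (hf : f.Even) : (_root_.deriv f).Odd := fun x => by
  have h := deriv_comp_neg f x
  simp only [hf.eq] at h
  rw [h, neg_neg]

theorem Function.Odd.deriv_deriv_zero [IsAddTorsionFree F] (hf : f.Odd) :
    _root_.deriv (_root_.deriv f) 0 = 0 :=
  hf.deriv.deriv.map_zero

end OddEven

theorem q3_odd (η τ : ℝ) : Function.Odd fun p => q3 η p τ := fun p => by
  simp only [q3, mul_neg, sin_neg, cos_neg]
  ring

theorem q3_zero_left (η τ : ℝ) : q3 η 0 τ = 0 := by
  simp [q3]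

theorem hasDerivAt_q3_fst_zero (η τ : ℝ) :
    HasDerivAt (fun p => q3 η p τ) (τ * η * cos τ + sin τ) 0 := by
  have hlin : HasDerivAt (fun p : ℝ => τ * η * p) (τ * η) 0 := by
    simpa using (hasDerivAt_id (0 : ℝ)).const_mul (τ * η)
  have hsin := ((hasDerivAt_sin _).comp 0 hlin).const_mul (cos τ)
  have hcos := ((hasDerivAt_id (0 : ℝ)).mul_const (sin τ)).mul ((hasDerivAt_cos _).comp 0 hlin)
  refine (hsin.add hcos).congr_deriv ?_
  simp only [mul_zero, cos_zero, sin_zero, id_eq, Function.comp_apply]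
  ring

theorem hasDerivAt_mul_cos_add_sin (η τ : ℝ) :
    HasDerivAt (fun τ => τ * η * cos τ + sin τ) ((1 + η) * cos τ - τ * η * sin τ) τ := by
  have h := (((hasDerivAt_id τ).mul_const η).mul (hasDerivAt_cos τ)).add (hasDerivAt_sin τ)
  refine h.congr_deriv ?_
  simp only [id_eq]
  ring

theorem stmt14 (η τc : ℝ) (hη : η > 0) (hτc : τc ∈ Set.Ioo (Real.pi/2) Real.pi)
    (hconj : Real.sin τc = -τc * η * Real.cos τc) :
    deriv (fun p => deriv (fun p' => q3 η p' τc) p) 0 = 0 ∧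
    deriv (fun τ => deriv (fun τ' => q3 η 0 τ') τ) τc = 0 ∧
    deriv (fun τ => deriv (fun p => q3 η p τ) 0) τc = (1 + η + τc^2 * η^2) * Real.cos τc ∧
    (1 + η + τc^2 * η^2) * Real.cos τc ≠ 0 := by
  have hcos : cos τc < 0 :=
    cos_neg_of_pi_div_two_lt_of_lt hτc.1 (by linarith [hτc.2, pi_pos])
  refine ⟨Function.Odd.deriv_deriv_zero (q3_odd η τc), by simp [q3_zero_left], ?_, ?_⟩
  · have hpartial : (fun τ => deriv (fun p => q3 η p τ) 0) = fun τ => τ * η * cos τ + sin τ :=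
      funext fun τ => (hasDerivAt_q3_fst_zero η τ).deriv
    rw [hpartial, (hasDerivAt_mul_cos_add_sin η τc).deriv, hconj]
    ring
  · exact mul_ne_zero (by positivity) hcos.ne
end
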